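/- arXiv:math/0507599 — 5 statements merged into one kernel-verified Lean document; each statement's English description precedes it below -/
import Mathlib

section
/- Let X be a real Banach space, and let ε > 0 and δ > 0 be such that for all f, g ∈ X* with ‖f‖ = 1, ‖g‖ = 1 and ε ≤ ‖f − g‖, one has ‖(f + g)/2‖ ≤ 1 − δ. Then for all x, y ∈ X with ‖x‖ = 1, ‖y‖ = 1 and ‖x − y‖ < δ, and all f, g ∈ X* with ‖f‖ = 1, ‖g‖ = 1, f(x) = 1 and g(y) = 1, one has ‖f − g‖ < ε. -/
/-!
Testing the average `(f + g)/2` on `x` gives `(1 + g x)/2`, and `g x ≥ g y - ‖x - y‖ > 1 - δ`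
because `g` is `1`-Lipschitz. So `‖(f + g)/2‖ > 1 - δ/2 ≥ 1 - δ`, which by the modulus
hypothesis forces `‖f - g‖ < ε`.
-/

section NormingFunctional

variable {X : Type*} [NormedAddCommGroup X] [NormedSpace ℝ X]

lemma StrongDual.apply_le_norm_of_norm_le_one (φ : StrongDual ℝ X) {x : X} (hx : ‖x‖ ≤ 1) :
    φ x ≤ ‖φ‖ :=
  (le_abs_self _).trans (φ.unit_le_opNorm x hx)

lemma StrongDual.sub_norm_sub_le_apply {g : StrongDual ℝ X} (hg : ‖g‖ ≤ 1) (x y : X) :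
    g y - ‖x - y‖ ≤ g x := by
  have hlip : g (y - x) ≤ ‖x - y‖ := by
    rw [norm_sub_rev]
    calc g (y - x) ≤ ‖g (y - x)‖ := le_abs_self _
      _ ≤ ‖g‖ * ‖y - x‖ := g.le_opNorm _
      _ ≤ ‖y - x‖ := mul_le_of_le_one_left (norm_nonneg _) hg
  rw [map_sub] at hlip
  linarith

lemma StrongDual.one_sub_half_norm_sub_le_norm_average {f g : StrongDual ℝ X} (hg : ‖g‖ ≤ 1)
    {x y : X} (hx : ‖x‖ ≤ 1) (hfx : f x = 1) (hgy : g y = 1) :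
    1 - ‖x - y‖ / 2 ≤ ‖(2⁻¹ : ℝ) • (f + g)‖ := by
  have hgx := StrongDual.sub_norm_sub_le_apply hg x y
  have havg := ((2⁻¹ : ℝ) • (f + g)).apply_le_norm_of_norm_le_one hx
  simp only [smul_apply, add_apply, hfx,
    smul_eq_mul] at havg
  linarith

end NormingFunctional

theorem norming_functional_uniform_continuity_modulus_general
    (X : Type*) [NormedAddCommGroup X] [NormedSpace ℝ X]
    (ε δ : ℝ)
    (hmod : ∀ f g : StrongDual ℝ X, ‖f‖ = 1 → ‖g‖ = 1 → ε ≤ ‖f - g‖ →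
      ‖(2⁻¹ : ℝ) • (f + g)‖ ≤ 1 - δ) :
    ∀ x y : X, ‖x‖ = 1 → ‖y‖ = 1 → ‖x - y‖ < δ →
      ∀ f g : StrongDual ℝ X, ‖f‖ = 1 → ‖g‖ = 1 → f x = 1 → g y = 1 →
        ‖f - g‖ < ε := by
  intro x y hx _ hxy f g hf hg hfx hgy
  by_contra! hfar
  have hupper := hmod f g hf hg hfar
  have hlower :=
    StrongDual.one_sub_half_norm_sub_le_norm_average hg.le hx.le hfx hgy
  linarith [norm_nonneg (x - y)]

/-- Quantitative uniform continuity of the duality (norming functional) map: if `δ` is a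
modulus of uniform convexity of `X*` at scale `ε`, then unit vectors `x, y` at distance
less than `δ` have norming functionals at distance less than `ε`. -/
theorem norming_functional_uniform_continuity_modulus
    (X : Type*) [NormedAddCommGroup X] [NormedSpace ℝ X] [CompleteSpace X]
    (ε δ : ℝ) (hε : 0 < ε) (hδ : 0 < δ)
    (hmod : ∀ f g : StrongDual ℝ X, ‖f‖ = 1 → ‖g‖ = 1 → ε ≤ ‖f - g‖ →
      ‖(2⁻¹ : ℝ) • (f + g)‖ ≤ 1 - δ) :
    ∀ x y : X, ‖x‖ = 1 → ‖y‖ = 1 → ‖x - y‖ < δ →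
      ∀ f g : StrongDual ℝ X, ‖f‖ = 1 → ‖g‖ = 1 → f x = 1 → g y = 1 →
        ‖f - g‖ < ε :=
  norming_functional_uniform_continuity_modulus_general X ε δ hmod
end

section
/- Let R be a unital ring and let α, α' ∈ R be arbitrary elements. Define the 2×2 matrices ω = [[α + (1 − α·α')·α, −(1 − α·α')],[1 − α'·α, α']] and ω' = [[α', 1 − α'·α],[−(1 − α·α'), α + α·(1 − α'·α)]]. Then ω·ω' = 1 and ω'·ω = 1, i.e. ω is invertible with inverse ω'. -/
/-- The matrix `ω = [[α + (1 − αα')α, −(1 − αα')],[1 − α'α, α']]` is invertible with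
explicit inverse `ω' = [[α', 1 − α'α],[−(1 − αα'), α + α(1 − α'α)]]`. -/
theorem omega_mul_omega_inv (R : Type*) [Ring R] (α α' : R) :
    !![α + (1 - α * α') * α, -(1 - α * α'); 1 - α' * α, α'] *
        !![α', 1 - α' * α; -(1 - α * α'), α + α * (1 - α' * α)] = 1 ∧
      !![α', 1 - α' * α; -(1 - α * α'), α + α * (1 - α' * α)] *
        !![α + (1 - α * α') * α, -(1 - α * α'); 1 - α' * α, α'] = 1 := by
  constructor <;>
  · ext i j
    fin_cases i <;> fin_cases j <;>
      simp [Matrix.mul_apply, Fin.sum_univ_two, Matrix.one_apply] <;> noncomm_ring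
end

section
/- Let R be a unital ring and let q ∈ R be an idempotent (q² = q). Define the 4×4 matrices Z = [[q, 0, 1−q, 0],[1−q, 0, 0, q],[0, 0, q, 1−q],[0, 1, 0, 0]] and Z' = [[q, 1−q, 0, 0],[0, 0, 0, 1],[1−q, 0, q, 0],[0, q, 1−q, 0]]. Then Z·Z' = 1 and Z'·Z = 1, i.e. Z is invertible with inverse Z'. -/
/-- For an idempotent `q`, the 4×4 matrix `Z(p,q)` of the difference construction is
invertible with the displayed explicit inverse. -/
theorem Z_matrix_invertible (R : Type*) [Ring R] (q : R) (hq : q * q = q) :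
    !![q, 0, 1 - q, 0; 1 - q, 0, 0, q; 0, 0, q, 1 - q; 0, 1, 0, 0] *
        !![q, 1 - q, 0, 0; 0, 0, 0, 1; 1 - q, 0, q, 0; 0, q, 1 - q, 0] = 1 ∧
      !![q, 1 - q, 0, 0; 0, 0, 0, 1; 1 - q, 0, q, 0; 0, q, 1 - q, 0] *
        !![q, 0, 1 - q, 0; 1 - q, 0, 0, q; 0, 0, q, 1 - q; 0, 1, 0, 0] = 1 := by
  constructor <;>
  · ext i j
    fin_cases i <;> fin_cases j <;>
      simp [Matrix.mul_apply, Fin.sum_univ_succ, Matrix.one_apply,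
        mul_sub, sub_mul, hq]
end

section
/- Let R be a unital ring and let q ∈ R be an idempotent (q² = q). With Z = [[q, 0, 1−q, 0],[1−q, 0, 0, q],[0, 0, q, 1−q],[0, 1, 0, 0]] and its inverse Z⁻¹ = [[q, 1−q, 0, 0],[0, 0, 0, 1],[1−q, 0, q, 0],[0, q, 1−q, 0]], one has Z⁻¹ · diag(q, 1−q, 0, 0) · Z = diag(1, 0, 0, 0). -/
open Matrix in
theorem my_mul_fin_four {α : Type*} [AddCommMonoid α] [Mul α]
    (a₁₁ a₁₂ a₁₃ a₁₄ a₂₁ a₂₂ a₂₃ a₂₄ a₃₁ a₃₂ a₃₃ a₃₄ a₄₁ a₄₂ a₄₃ a₄₄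
     b₁₁ b₁₂ b₁₃ b₁₄ b₂₁ b₂₂ b₂₃ b₂₄ b₃₁ b₃₂ b₃₃ b₃₄ b₄₁ b₄₂ b₄₃ b₄₄ : α) :
    !![a₁₁, a₁₂, a₁₃, a₁₄; a₂₁, a₂₂, a₂₃, a₂₄; a₃₁, a₃₂, a₃₃, a₃₄; a₄₁, a₄₂, a₄₃, a₄₄] *
    !![b₁₁, b₁₂, b₁₃, b₁₄; b₂₁, b₂₂, b₂₃, b₂₄; b₃₁, b₃₂, b₃₃, b₃₄; b₄₁, b₄₂, b₄₃, b₄₄] =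
    !![a₁₁*b₁₁ + a₁₂*b₂₁ + a₁₃*b₃₁ + a₁₄*b₄₁, a₁₁*b₁₂ + a₁₂*b₂₂ + a₁₃*b₃₂ + a₁₄*b₄₂,
       a₁₁*b₁₃ + a₁₂*b₂₃ + a₁₃*b₃₃ + a₁₄*b₄₃, a₁₁*b₁₄ + a₁₂*b₂₄ + a₁₃*b₃₄ + a₁₄*b₄₄;
       a₂₁*b₁₁ + a₂₂*b₂₁ + a₂₃*b₃₁ + a₂₄*b₄₁, a₂₁*b₁₂ + a₂₂*b₂₂ + a₂₃*b₃₂ + a₂₄*b₄₂,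
       a₂₁*b₁₃ + a₂₂*b₂₃ + a₂₃*b₃₃ + a₂₄*b₄₃, a₂₁*b₁₄ + a₂₂*b₂₄ + a₂₃*b₃₄ + a₂₄*b₄₄;
       a₃₁*b₁₁ + a₃₂*b₂₁ + a₃₃*b₃₁ + a₃₄*b₄₁, a₃₁*b₁₂ + a₃₂*b₂₂ + a₃₃*b₃₂ + a₃₄*b₄₂,
       a₃₁*b₁₃ + a₃₂*b₂₃ + a₃₃*b₃₃ + a₃₄*b₄₃, a₃₁*b₁₄ + a₃₂*b₂₄ + a₃₃*b₃₄ + a₃₄*b₄₄;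
       a₄₁*b₁₁ + a₄₂*b₂₁ + a₄₃*b₃₁ + a₄₄*b₄₁, a₄₁*b₁₂ + a₄₂*b₂₂ + a₄₃*b₃₂ + a₄₄*b₄₂,
       a₄₁*b₁₃ + a₄₂*b₂₃ + a₄₃*b₃₃ + a₄₄*b₄₃, a₄₁*b₁₄ + a₄₂*b₂₄ + a₄₃*b₃₄ + a₄₄*b₄₄] := by
  ext i j
  fin_cases i <;> fin_cases j <;>
    simp [Matrix.mul_apply, dotProduct, Fin.sum_univ_succ, ← add_assoc]

/-- For an idempotent `q`, conjugating `diag(q, 1 − q, 0, 0)` by the matrix `Z` of the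
difference construction yields `diag(1, 0, 0, 0)`. -/
theorem Z_conjugation_diag (R : Type*) [Ring R] (q : R) (hq : q * q = q) :
    !![q, 1 - q, 0, 0; 0, 0, 0, 1; 1 - q, 0, q, 0; 0, q, 1 - q, 0] *
        !![q, 0, 0, 0; 0, 1 - q, 0, 0; 0, 0, 0, 0; 0, 0, 0, 0] *
        !![q, 0, 1 - q, 0; 1 - q, 0, 0, q; 0, 0, q, 1 - q; 0, 1, 0, 0] =
      !![(1 : R), 0, 0, 0; 0, 0, 0, 0; 0, 0, 0, 0; 0, 0, 0, 0] := by
  rw [my_mul_fin_four, my_mul_fin_four]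
  ext i j
  fin_cases i <;> fin_cases j <;> simp [Matrix.vecHead, Matrix.vecTail] <;> noncomm_ring [hq]
end

section
/- Let X be a real Banach space whose topological dual X* is uniformly convex. For every ε > 0 and r > 0 there exists N > 0 such that the following holds: for all x₁, x₂ ∈ X with ‖x₁ − x₂‖ ≤ r, ‖x₁‖ ≥ N and ‖x₂‖ ≥ N, and all f₁, f₂ ∈ X* with ‖fᵢ‖ = ‖xᵢ‖ and fᵢ(xᵢ) = ‖xᵢ‖² (i = 1, 2), one has ‖(1/‖x₁‖)·f₁ − (1/‖x₂‖)·f₂‖ < ε. -/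
/-!
Normalise `gᵢ = ‖xᵢ‖⁻¹ • fᵢ`, so that `‖gᵢ‖ ≤ 1`. Testing `g₁ + g₂` against `x₁` gives
`(g₁ + g₂) x₁ ≥ 2‖x₁‖ - 2‖x₁ - x₂‖`, hence `‖g₁ + g₂‖ ≥ 2 - 2r/‖x₁‖`, which is as close to `2` as
we like once `‖x₁‖` is large. Uniform convexity of the dual then forces `g₁` and `g₂` to be close.
-/

section

variable {X : Type*} [NormedAddCommGroup X] [NormedSpace ℝ X]

theorem norm_inv_norm_smul_le_one {f : StrongDual ℝ X} {x : X} (hf : ‖f‖ ≤ ‖x‖) :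
    ‖‖x‖⁻¹ • f‖ ≤ 1 := by
  rw [norm_smul, norm_inv, norm_norm]
  exact inv_mul_le_one_of_le₀ hf (norm_nonneg x)

theorem norm_sub_norm_sub_le_inv_norm_smul_apply {f : StrongDual ℝ X} {x : X}
    (hf : ‖f‖ ≤ ‖x‖) (hfx : f x = ‖x‖ ^ 2) (y : X) :
    ‖x‖ - ‖x - y‖ ≤ (‖x‖⁻¹ • f) y := by
  set g := ‖x‖⁻¹ • f
  have hgx : g x = ‖x‖ := by
    rcases eq_or_ne ‖x‖ 0 with hx | hx
    · simp [g, hx]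
    · simp only [g, smul_apply, hfx, smul_eq_mul]
      field_simp
  have hg_sub : g (x - y) ≤ ‖x - y‖ :=
    calc g (x - y) ≤ ‖g‖ * ‖x - y‖ := (Real.le_norm_self _).trans (g.le_opNorm _)
      _ ≤ 1 * ‖x - y‖ := by gcongr; exact norm_inv_norm_smul_le_one hf
      _ = ‖x - y‖ := one_mul _
  rw [map_sub, hgx] at hg_sub
  linarith

theorem two_sub_le_norm_inv_norm_smul_add {f₁ f₂ : StrongDual ℝ X} {x₁ x₂ : X}
    (hx₁ : x₁ ≠ 0) (hf₁ : ‖f₁‖ ≤ ‖x₁‖) (hf₁x : f₁ x₁ = ‖x₁‖ ^ 2)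
    (hf₂ : ‖f₂‖ ≤ ‖x₂‖) (hf₂x : f₂ x₂ = ‖x₂‖ ^ 2) :
    2 - 2 * ‖x₁ - x₂‖ / ‖x₁‖ ≤ ‖‖x₁‖⁻¹ • f₁ + ‖x₂‖⁻¹ • f₂‖ := by
  set g := ‖x₁‖⁻¹ • f₁ + ‖x₂‖⁻¹ • f₂
  have hx₁_pos : 0 < ‖x₁‖ := norm_pos_iff.mpr hx₁
  have h₁ := norm_sub_norm_sub_le_inv_norm_smul_apply hf₁ hf₁x x₁
  have h₂ := norm_sub_norm_sub_le_inv_norm_smul_apply hf₂ hf₂x x₁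
  have h₁₂ : ‖x₁‖ - ‖x₁ - x₂‖ ≤ ‖x₂‖ := by linarith [norm_sub_norm_le x₁ x₂]
  rw [sub_self, norm_zero, sub_zero] at h₁
  rw [norm_sub_rev] at h₂
  have hg : g x₁ ≤ ‖g‖ * ‖x₁‖ := (Real.le_norm_self _).trans (g.le_opNorm _)
  have hgx₁ : g x₁ = (‖x₁‖⁻¹ • f₁) x₁ + (‖x₂‖⁻¹ • f₂) x₁ := rfl
  have hg_lower : 2 * ‖x₁‖ - 2 * ‖x₁ - x₂‖ ≤ ‖g‖ * ‖x₁‖ := by linarith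
  calc 2 - 2 * ‖x₁ - x₂‖ / ‖x₁‖ = (2 * ‖x₁‖ - 2 * ‖x₁ - x₂‖) / ‖x₁‖ := by field_simp
    _ ≤ ‖g‖ := (div_le_iff₀ hx₁_pos).mpr hg_lower

end

theorem normalized_duality_map_uniformly_continuous_general
    (X : Type*) [NormedAddCommGroup X] [NormedSpace ℝ X]
    [UniformConvexSpace (StrongDual ℝ X)] :
    ∀ ε > (0 : ℝ), ∀ r > (0 : ℝ), ∃ N > (0 : ℝ),
      ∀ (x₁ x₂ : X) (f₁ f₂ : StrongDual ℝ X),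
        ‖x₁ - x₂‖ ≤ r → N ≤ ‖x₁‖ → N ≤ ‖x₂‖ →
        ‖f₁‖ = ‖x₁‖ → f₁ x₁ = ‖x₁‖ ^ 2 →
        ‖f₂‖ = ‖x₂‖ → f₂ x₂ = ‖x₂‖ ^ 2 →
        ‖‖x₁‖⁻¹ • f₁ - ‖x₂‖⁻¹ • f₂‖ < ε := by
  intro ε hε r hr
  obtain ⟨δ, hδ, h_convex⟩ := exists_forall_closed_ball_dist_add_le_two_sub (StrongDual ℝ X) hε
  refine ⟨4 * r / δ, by positivity, ?_⟩
  intro x₁ x₂ f₁ f₂ hr₁₂ hN₁ _ hf₁ hf₁x hf₂ hf₂x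
  have hx₁ : 0 < ‖x₁‖ := (by positivity : 0 < 4 * r / δ).trans_le hN₁
  have h_far : 2 - δ < ‖‖x₁‖⁻¹ • f₁ + ‖x₂‖⁻¹ • f₂‖ :=
    calc 2 - δ < 2 - 2 * r / (4 * r / δ) := by field_simp; linarith
      _ ≤ 2 - 2 * ‖x₁ - x₂‖ / ‖x₁‖ := by gcongr
      _ ≤ _ := two_sub_le_norm_inv_norm_smul_add (norm_pos_iff.mp hx₁) hf₁.le hf₁x hf₂.le hf₂x
  by_contra! h_sep
  exact h_far.not_ge (h_convex (norm_inv_norm_smul_le_one hf₁.le)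
    (norm_inv_norm_smul_le_one hf₂.le) h_sep)

/-- Uniform continuity of the normalized duality map far from the origin: if the dual of
the real Banach space `X` is uniformly convex, then for all `ε, r > 0` there is `N > 0`
such that whenever `‖x₁ − x₂‖ ≤ r`, `‖x₁‖, ‖x₂‖ ≥ N`, and `fᵢ` are the norming
functionals of `xᵢ` (i.e. `‖fᵢ‖ = ‖xᵢ‖` and `fᵢ xᵢ = ‖xᵢ‖²`), the normalized
functionals `fᵢ/‖xᵢ‖` are `ε`-close. -/
theorem normalized_duality_map_uniformly_continuous
    (X : Type*) [NormedAddCommGroup X] [NormedSpace ℝ X] [CompleteSpace X]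
    [UniformConvexSpace (StrongDual ℝ X)] :
    ∀ ε > (0 : ℝ), ∀ r > (0 : ℝ), ∃ N > (0 : ℝ),
      ∀ (x₁ x₂ : X) (f₁ f₂ : StrongDual ℝ X),
        ‖x₁ - x₂‖ ≤ r → N ≤ ‖x₁‖ → N ≤ ‖x₂‖ →
        ‖f₁‖ = ‖x₁‖ → f₁ x₁ = ‖x₁‖ ^ 2 →
        ‖f₂‖ = ‖x₂‖ → f₂ x₂ = ‖x₂‖ ^ 2 →
        ‖‖x₁‖⁻¹ • f₁ - ‖x₂‖⁻¹ • f₂‖ < ε :=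
  normalized_duality_map_uniformly_continuous_general X
end
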